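/- arXiv:1701.07733 — 2 statements merged into one kernel-verified Lean document; each statement's English description precedes it below -/
import Mathlib

section
/- For every vertex k ∈ Fin N, the canonical stabilizer generator fixes the qudit hypergraph state: g_k |H(m)⟩ = |H(m)⟩, where g_k = X_k ∘ ∏_{e : k ∈ e} (C_{e∖{k}}^{-1})^{m(e)} (the exponent being any integer lift of m(e) ∈ ZMod d, which is well defined since C_{e'}^d = id for every hyperedge e'). -/
/-!
Write `χ` for the standard additive character of `ZMod d`, so that `ω ^ a.val = χ a`. The
amplitude of `|H(m)⟩` at `i` is then `d^{-N/2} χ(S(i))` with `S(i) = ∑ₑ m(e) ∏_{j ∈ e} i_j`,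
and the diagonal part of `g_k` multiplies by `χ(-T(i))` with
`T(i) = ∑_{e ∋ k} m(e) ∏_{j ∈ e ∖ {k}} i_j`. Since `S` is affine in `i_k` with slope `T`, and
`T` does not involve `i_k`, the shift `X_k` turns `χ(-T) χ(S)` back into `χ(S)`.
-/

open Finset

noncomputable section

/-- The primitive `d`-th root of unity `ω = exp(2πi/d)`. -/
def omega (d : ℕ) : ℂ := Complex.exp (2 * Real.pi * Complex.I / d)

/-- The `N`-qudit Hilbert space, modeled as functions from points to amplitudes. -/
abbrev QV (d N : ℕ) := (Fin N → Fin d) → ℂ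

/-- Diagonal operator with diagonal phase function `φ`. -/
def diagOp (d N : ℕ) (φ : (Fin N → Fin d) → ℂ) : Module.End ℂ (QV d N) where
  toFun ψ := fun i => φ i * ψ i
  map_add' ψ ψ' := by funext i; simp [mul_add]
  map_smul' c ψ := by funext i; simp [smul_eq_mul]; ring

lemma diag_comm (d N : ℕ) (φ φ' : (Fin N → Fin d) → ℂ) :
    Commute (diagOp d N φ) (diagOp d N φ') := by
  apply LinearMap.ext; intro ψ; funext i
  simp [diagOp, Module.End.mul_apply]; ring

/-- The hyperedge operator `C_e`. -/
def Ce (d N : ℕ) (e : Finset (Fin N)) : Module.End ℂ (QV d N) :=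
  diagOp d N fun i => omega d ^ ∏ k ∈ e, (i k : ℕ)

/-- The inverse of the hyperedge operator `C_e`. -/
def CeInv (d N : ℕ) (e : Finset (Fin N)) : Module.End ℂ (QV d N) :=
  diagOp d N fun i => (omega d ^ ∏ k ∈ e, (i k : ℕ))⁻¹

/-- The qudit hypergraph state `|H(m)⟩` for a multiplicity function `m`. -/
def Hstate (d N : ℕ) (m : Finset (Fin N) → ZMod d) : QV d N :=
  fun i => (d : ℂ) ^ (-(N : ℂ)/2) *
    omega d ^ (∑ e : Finset (Fin N), m e * ∏ k ∈ e, ((i k : ℕ) : ZMod d)).val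

/-- The generalized Pauli `X` operator on vertex `k`. -/
def Xop (d N : ℕ) [NeZero d] (k : Fin N) : Module.End ℂ (QV d N) where
  toFun ψ := fun i => ψ (Function.update i k (i k + 1))
  map_add' ψ ψ' := by funext i; simp
  map_smul' c ψ := by funext i; simp

/-- The canonical stabilizer generator
`g_k = X_k ∘ ∏_{e : k ∈ e} (C_{e∖{k}}⁻¹)^{m(e)}` (exponents are the canonical
integer lifts of values in `ZMod d`). -/
def gk (d N : ℕ) [NeZero d] (m : Finset (Fin N) → ZMod d) (k : Fin N) :
    Module.End ℂ (QV d N) :=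
  Xop d N k *
    Finset.noncommProd (Finset.univ.filter fun e : Finset (Fin N) => k ∈ e)
      (fun e => CeInv d N (e.erase k) ^ (m e).val)
      (fun _ _ _ _ _ => (diag_comm d N _ _).pow_pow _ _)

theorem AddChar.map_sum_eq_prod {A M ι : Type*} [AddCommMonoid A] [CommMonoid M]
    (ψ : AddChar A M) (s : Finset ι) (f : ι → A) :
    ψ (∑ i ∈ s, f i) = ∏ i ∈ s, ψ (f i) :=
  map_prod ψ.toMonoidHom (fun i => Multiplicative.ofAdd (f i)) s

theorem Finset.prod_update_add_one {ι R : Type*} [DecidableEq ι] [CommRing R] {s : Finset ι}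
    {k : ι} (hk : k ∈ s) (x : ι → R) :
    ∏ j ∈ s, Function.update x k (x k + 1) j = ∏ j ∈ s, x j + ∏ j ∈ s.erase k, x j := by
  rw [prod_update_of_mem hk, sdiff_singleton_eq_erase, ← mul_prod_erase s x hk]
  ring

theorem Finset.sum_mul_prod_update_add_one {ι R : Type*} [Fintype ι] [DecidableEq ι]
    [CommRing R] (m : Finset ι → R) (x : ι → R) (k : ι) :
    ∑ e, m e * ∏ j ∈ e, Function.update x k (x k + 1) j
      = ∑ e, m e * ∏ j ∈ e, x j + ∑ e with k ∈ e, m e * ∏ j ∈ e.erase k, x j := by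
  rw [sum_filter, ← sum_add_distrib]
  refine sum_congr rfl fun e _ => ?_
  split_ifs with hk
  · rw [prod_update_add_one hk, mul_add]
  · rw [prod_update_of_notMem hk, add_zero]

theorem Fin.natCast_val_add_one {d : ℕ} [NeZero d] (a : Fin d) :
    (((a + 1 : Fin d) : ℕ) : ZMod d) = (a : ℕ) + 1 := by
  rw [Fin.val_add, Fin.val_one', ZMod.natCast_mod, Nat.cast_add, ZMod.natCast_mod, Nat.cast_one]

theorem natCast_val_update_add_one {ι : Type*} [DecidableEq ι] {d : ℕ} [NeZero d]
    (i : ι → Fin d) (k : ι) :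
    (fun j => ((Function.update i k (i k + 1) j : ℕ) : ZMod d))
      = Function.update (fun j => ((i j : ℕ) : ZMod d)) k (((i k : ℕ) : ZMod d) + 1) := by
  ext j
  rw [Function.apply_update (fun _ (a : Fin d) => ((a : ℕ) : ZMod d)), Fin.natCast_val_add_one]

theorem omega_pow_eq_stdAddChar (d : ℕ) [NeZero d] (n : ℕ) :
    omega d ^ n = ZMod.stdAddChar (n : ZMod d) := by
  rw [ZMod.stdAddChar_apply, ZMod.toCircle_natCast, omega, ← Complex.exp_nat_mul]
  ring_nf

section Operators

variable (d N : ℕ)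

def diagOpHom : ((Fin N → Fin d) → ℂ) →* Module.End ℂ (QV d N) where
  toFun := diagOp d N
  map_one' := by ext ψ i; simp [diagOp]
  map_mul' φ φ' := by ext ψ i; simp [diagOp, Module.End.mul_apply, mul_assoc]

theorem diagOpHom_apply (φ : (Fin N → Fin d) → ℂ) : diagOpHom d N φ = diagOp d N φ := rfl

theorem diagOp_noncommProd {ι : Type*} (s : Finset ι) (φ : ι → (Fin N → Fin d) → ℂ) (comm) :
    s.noncommProd (fun e => diagOp d N (φ e)) comm = diagOp d N (∏ e ∈ s, φ e) := by
  rw [← noncommProd_eq_prod]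
  exact (map_noncommProd _ _ _ (diagOpHom d N)).symm

variable {d N} [NeZero d]

theorem CeInv_pow_val (e : Finset (Fin N)) (a : ZMod d) :
    CeInv d N e ^ a.val
      = diagOp d N fun i => ZMod.stdAddChar (-(a * ∏ j ∈ e, ((i j : ℕ) : ZMod d))) := by
  rw [CeInv, ← diagOpHom_apply, ← map_pow, diagOpHom_apply]
  congr 1
  ext i
  rw [Pi.pow_apply, ← Nat.cast_prod, omega_pow_eq_stdAddChar, ← AddChar.map_neg_eq_inv,
    ← AddChar.map_nsmul_eq_pow, nsmul_eq_mul, ZMod.natCast_zmod_val, Nat.cast_prod, mul_neg]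

theorem gk_eq_Xop_mul_diagOp (m : Finset (Fin N) → ZMod d) (k : Fin N) :
    gk d N m k = Xop d N k * diagOp d N fun i =>
      ZMod.stdAddChar (-∑ e with k ∈ e, m e * ∏ j ∈ e.erase k, ((i j : ℕ) : ZMod d)) := by
  refine congrArg (Xop d N k * ·) ((noncommProd_congr rfl
    (fun e _ => CeInv_pow_val (e.erase k) (m e)) _).trans ?_)
  refine (diagOp_noncommProd d N _ _ _).trans (congrArg _ ?_)
  ext i
  rw [Finset.prod_apply, ← sum_neg_distrib, AddChar.map_sum_eq_prod]

theorem Hstate_apply (m : Finset (Fin N) → ZMod d) (i : Fin N → Fin d) :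
    Hstate d N m i = (d : ℂ) ^ (-(N : ℂ) / 2) *
      ZMod.stdAddChar (∑ e, m e * ∏ j ∈ e, ((i j : ℕ) : ZMod d)) := by
  rw [Hstate, omega_pow_eq_stdAddChar, ZMod.natCast_zmod_val]

theorem Xop_mul_diagOp_apply (k : Fin N) (φ : (Fin N → Fin d) → ℂ)
    (ψ : QV d N) (i : Fin N → Fin d) :
    (Xop d N k * diagOp d N φ) ψ i
      = φ (Function.update i k (i k + 1)) * ψ (Function.update i k (i k + 1)) :=
  rfl

end Operators

theorem gk_fixes_Hstate_general (d N : ℕ) [NeZero d]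
    (m : Finset (Fin N) → ZMod d) (k : Fin N) :
    gk d N m k (Hstate d N m) = Hstate d N m := by
  ext i
  set x : Fin N → ZMod d := fun j => ((i j : ℕ) : ZMod d)
  set S := ∑ e, m e * ∏ j ∈ e, x j
  set T := ∑ e with k ∈ e, m e * ∏ j ∈ e.erase k, x j
  have hshift := natCast_val_update_add_one i k
  have hT : ∑ e with k ∈ e, m e * ∏ j ∈ e.erase k, Function.update x k (x k + 1) j = T :=
    sum_congr rfl fun e _ => by rw [prod_update_of_notMem (notMem_erase k e)]
  rw [gk_eq_Xop_mul_diagOp, Xop_mul_diagOp_apply, Hstate_apply, Hstate_apply, hshift, hT,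
    sum_mul_prod_update_add_one]
  calc ZMod.stdAddChar (-T) * ((d : ℂ) ^ (-(N : ℂ) / 2) * ZMod.stdAddChar (S + T))
      = (d : ℂ) ^ (-(N : ℂ) / 2) * ZMod.stdAddChar (S + T + -T) := by
        rw [AddChar.map_add_eq_mul _ (S + T)]; ring
    _ = (d : ℂ) ^ (-(N : ℂ) / 2) * ZMod.stdAddChar S := by rw [add_neg_cancel_right]

/-- Every canonical stabilizer generator fixes the qudit hypergraph
state: `g_k |H(m)⟩ = |H(m)⟩`. -/
theorem gk_fixes_Hstate (d N : ℕ) [NeZero d] (hd : 2 ≤ d) (hN : 1 ≤ N)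
    (m : Finset (Fin N) → ZMod d) (k : Fin N) :
    gk d N m k (Hstate d N m) = Hstate d N m :=
  gk_fixes_Hstate_general d N m k

end
end

section
/- Fix integers d ≥ 2, n ≥ 0, and m with 1 ≤ m ≤ d−1, and define the matrix Ω : Matrix (Fin d) (Fin d) ℂ by Ω i j = Σ_{v : Fin n → Fin d} ω^{m·i·j·∏_l v(l)} (all factors read as integers in {0,…,d−1}). Then Ω has rank at least 2. Consequently the two-qudit state with (unnormalized) amplitudes Ω i j — obtained from the N-uniform qudit hypergraph state (N = n + 2) with multiplicity m on the single hyperedge containing all vertices by projecting the last n qudits onto |+⟩ — is entangled, i.e., not a product state. -/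
/-!
Row `0` and column `0` of `Ω` are constant, equal to `D = dⁿ`, so the `{0,1} × {0,1}` minor is
`D (Ω₁₁ - D)`. The entry `Ω₁₁` is a sum of `dⁿ` unit complex numbers, and such a sum equals `dⁿ`
only if every term is `1`; the term of the constant function `v = 1` is `ωᵐ ≠ 1`.
-/

open Finset

noncomputable section

theorem Matrix.card_le_rank_of_det_submatrix_ne_zero {K m n k : Type*} [Field K] [Fintype n]
    [Fintype k] [DecidableEq k] (A : Matrix m n K) (r : k → m) (c : k → n)
    (h : (A.submatrix r c).det ≠ 0) : Fintype.card k ≤ A.rank := by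
  have hunit : IsUnit (A.submatrix r c) :=
    (Matrix.isUnit_iff_isUnit_det _).mpr (isUnit_iff_ne_zero.mpr h)
  rw [← Matrix.rank_of_isUnit _ hunit]
  exact Matrix.rank_submatrix_le A r c

theorem Matrix.two_le_rank_of_apply_eq_of_apply_ne {K m n : Type*} [Field K] [Fintype n]
    (A : Matrix m n K) {i₀ i₁ : m} {j₀ j₁ : n} {c : K} (hc : c ≠ 0) (h₀₀ : A i₀ j₀ = c)
    (h₀₁ : A i₀ j₁ = c) (h₁₀ : A i₁ j₀ = c) (h₁₁ : A i₁ j₁ ≠ c) : 2 ≤ A.rank := by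
  have hdet : (A.submatrix ![i₀, i₁] ![j₀, j₁]).det = c * (A i₁ j₁ - c) := by
    rw [Matrix.det_fin_two]
    simp only [Matrix.submatrix_apply, Matrix.cons_val_zero, Matrix.cons_val_one, h₀₀, h₀₁, h₁₀]
    ring
  simpa using A.card_le_rank_of_det_submatrix_ne_zero (k := Fin 2) _ _
    (hdet ▸ mul_ne_zero hc (sub_ne_zero.mpr h₁₁))

open scoped ComplexOrder in
theorem Complex.eq_one_of_re_eq_one_of_norm_le_one {z : ℂ} (hre : z.re = 1) (hz : ‖z‖ ≤ 1) :
    z = 1 := by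
  have hnonneg : 0 ≤ z :=
    Complex.re_eq_norm.mp (le_antisymm (Complex.re_le_norm z) (hre ▸ hz))
  exact Complex.ext hre (Complex.nonneg_iff.mp hnonneg).2.symm

theorem Complex.eq_one_of_sum_eq_card {ι : Type*} {s : Finset ι} {z : ι → ℂ}
    (hz : ∀ i ∈ s, ‖z i‖ ≤ 1) (hsum : ∑ i ∈ s, z i = #s) : ∀ i ∈ s, z i = 1 := by
  have hre : ∑ i ∈ s, (z i).re = ∑ _i ∈ s, (1 : ℝ) := by
    simpa using congrArg Complex.re hsum
  have hle : ∀ i ∈ s, (z i).re ≤ 1 := fun i hi => (Complex.re_le_norm _).trans (hz i hi)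
  intro i hi
  exact Complex.eq_one_of_re_eq_one_of_norm_le_one
    ((Finset.sum_eq_sum_iff_of_le hle).mp hre i hi) (hz i hi)

theorem isPrimitiveRoot_omega {d : ℕ} (hd : d ≠ 0) : IsPrimitiveRoot (omega d) d := by
  simpa [omega] using Complex.isPrimitiveRoot_exp d hd

/-- For `d ≥ 2`, `n ≥ 0` and `1 ≤ m ≤ d − 1`, the amplitude
matrix `Ω i j = Σ_{v : Fin n → Fin d} ω^{m·i·j·∏ₗ v l}` of the residual two-qudit
state (obtained from the `N`-uniform qudit hypergraph state, `N = n + 2`, by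
projecting the last `n` qudits onto `|+⟩`) has rank at least 2; consequently that
state is entangled, i.e. not a product state. -/
theorem residual_matrix_rank_ge_two (d n m : ℕ) (hd : 2 ≤ d)
    (hm1 : 1 ≤ m) (hm2 : m ≤ d - 1)
    (Ω : Matrix (Fin d) (Fin d) ℂ)
    (hΩ : ∀ i j : Fin d,
      Ω i j = ∑ v : Fin n → Fin d,
        omega d ^ (m * (i : ℕ) * (j : ℕ) * ∏ l, (v l : ℕ))) :
    2 ≤ Ω.rank := by
  have hω := isPrimitiveRoot_omega (by omega : d ≠ 0)
  set D : ℂ := (d : ℂ) ^ n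
  have hΩ_eq_D : ∀ i j : Fin d, (i : ℕ) * j = 0 → Ω i j = D := by
    intro i j hij
    simp [hΩ, mul_assoc, hij, D]
  let i₀ : Fin d := ⟨0, by omega⟩
  let i₁ : Fin d := ⟨1, by omega⟩
  have hΩ₁₁ : Ω i₁ i₁ ≠ D := by
    intro h
    have hsum : ∑ v : Fin n → Fin d, omega d ^ (m * (i₁ : ℕ) * (i₁ : ℕ) * ∏ l, (v l : ℕ))
        = #(univ : Finset (Fin n → Fin d)) := by
      rw [← hΩ, h]
      simp [D]
    have hterms := Complex.eq_one_of_sum_eq_card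
      (fun v _ => by simp [hω.norm'_eq_one (by omega : d ≠ 0)]) hsum (fun _ => i₁) (mem_univ _)
    simp only [i₁, prod_const_one, mul_one] at hterms
    exact hω.pow_ne_one_of_pos_of_lt (by omega) (by omega) hterms
  exact Ω.two_le_rank_of_apply_eq_of_apply_ne (pow_ne_zero _ (Nat.cast_ne_zero.mpr (by omega)))
    (hΩ_eq_D i₀ i₀ (zero_mul _)) (hΩ_eq_D i₀ i₁ (zero_mul _)) (hΩ_eq_D i₁ i₀ (mul_zero _)) hΩ₁₁

end
end
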